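/- arXiv:2303.14601 — 8 statements merged into one kernel-verified Lean document; each statement's English description precedes it below -/
import Mathlib

section
/- Generalized Neyman–Pearson lower-bound direction: Let X, Y be random variables on a finite space Φ with probability mass functions p_X, p_Y, and g: Φ → [0,1] a function with g(Z) = 0 for all Z in a subset Φ'. Suppose O ⊆ Φ \ Φ' satisfies p_Y(Z) ≤ ρ·p_X(Z) for all Z ∈ O and p_Y(Z) ≥ ρ·p_X(Z) for all Z ∈ (Φ \ Φ') \ O, for some ρ > 0. If E[g(X)] ≥ Pr(X ∈ O), then E[g(Y)] ≥ Pr(Y ∈ O). -/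
open Finset

/-! The indicator `1_O` is a likelihood-ratio test: `(1_O - g) * (pY - ρ • pX) ≤ 0` pointwise,
because `1_O - g ≥ 0` on `O`, where `pY ≤ ρ • pX`, and `1_O - g ≤ 0` off `O`, where either `g = 0`
or `pY ≥ ρ • pX`. Summing gives `Pr(Y ∈ O) - E[g(Y)] ≤ ρ (Pr(X ∈ O) - E[g(X)]) ≤ 0`. -/

lemma sum_mul_le_mul_sum_mul_of_mul_sub_nonpos {ι R : Type*} [CommRing R] [PartialOrder R]
    [IsOrderedRing R] (s : Finset ι) (h pX pY : ι → R) (ρ : R)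
    (hsign : ∀ z ∈ s, h z * (pY z - ρ * pX z) ≤ 0) :
    ∑ z ∈ s, h z * pY z ≤ ρ * ∑ z ∈ s, h z * pX z := by
  have hsum : ∑ z ∈ s, h z * (pY z - ρ * pX z) ≤ 0 := sum_nonpos hsign
  simp only [mul_sub, sum_sub_distrib, mul_left_comm (h _) ρ, ← mul_sum] at hsum
  exact sub_nonpos.mp hsum

lemma sum_ite_mem_sub_mul {ι R : Type*} [Fintype ι] [DecidableEq ι] [CommRing R]
    (O : Finset ι) (g p : ι → R) :
    ∑ z, ((if z ∈ O then 1 else 0) - g z) * p z = ∑ z ∈ O, p z - ∑ z, g z * p z := by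
  simp only [sub_mul, ite_mul, one_mul, zero_mul, sum_sub_distrib, sum_ite_mem, univ_inter]

theorem neyman_pearson_lower_general {Φ : Type*} [Fintype Φ] [DecidableEq Φ]
    (pX pY : Φ → ℝ)
    (g : Φ → ℝ) (hg0 : ∀ z, 0 ≤ g z) (hg1 : ∀ z, g z ≤ 1)
    (Φ' : Finset Φ) (hgΦ' : ∀ z ∈ Φ', g z = 0)
    (O : Finset Φ)
    (ρ : ℝ) (hρ : 0 < ρ)
    (hle : ∀ z ∈ O, pY z ≤ ρ * pX z)
    (hge : ∀ z ∈ (Finset.univ \ Φ') \ O, ρ * pX z ≤ pY z)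
    (hX : ∑ z ∈ O, pX z ≤ ∑ z, g z * pX z) :
    ∑ z ∈ O, pY z ≤ ∑ z, g z * pY z := by
  have hsign : ∀ z ∈ univ, ((if z ∈ O then 1 else 0) - g z) * (pY z - ρ * pX z) ≤ 0 := by
    intro z _
    by_cases hzO : z ∈ O
    · rw [if_pos hzO]
      exact mul_nonpos_of_nonneg_of_nonpos (sub_nonneg.mpr (hg1 z)) (sub_nonpos.mpr (hle z hzO))
    by_cases hzΦ' : z ∈ Φ'
    · simp [hzO, hgΦ' z hzΦ']
    · rw [if_neg hzO, zero_sub, neg_mul]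
      exact neg_nonpos.mpr <|
        mul_nonneg (hg0 z) (sub_nonneg.mpr (hge z (by simp [hzΦ', hzO])))
  have hcompare := sum_mul_le_mul_sum_mul_of_mul_sub_nonpos univ _ pX pY ρ hsign
  rw [sum_ite_mem_sub_mul, sum_ite_mem_sub_mul] at hcompare
  have hX' : ρ * (∑ z ∈ O, pX z - ∑ z, g z * pX z) ≤ 0 :=
    mul_nonpos_of_nonneg_of_nonpos hρ.le (sub_nonpos.mpr hX)
  linarith

/-- Generalized Neyman–Pearson lemma, lower-bound direction. `Φ` is a finite space, `pX, pY`
are pmfs on it, `g : Φ → [0,1]` vanishes on `Φ'`, and `O ⊆ Φ \ Φ'` satisfies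
`pY ≤ ρ·pX` on `O` and `pY ≥ ρ·pX` on `(Φ \ Φ') \ O` for some `ρ > 0`.
If `E[g(X)] ≥ Pr(X ∈ O)` then `E[g(Y)] ≥ Pr(Y ∈ O)`. -/
theorem neyman_pearson_lower {Φ : Type*} [Fintype Φ] [DecidableEq Φ]
    (pX pY : Φ → ℝ)
    (hpX0 : ∀ z, 0 ≤ pX z) (hpY0 : ∀ z, 0 ≤ pY z)
    (hpX1 : ∑ z, pX z = 1) (hpY1 : ∑ z, pY z = 1)
    (g : Φ → ℝ) (hg0 : ∀ z, 0 ≤ g z) (hg1 : ∀ z, g z ≤ 1)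
    (Φ' : Finset Φ) (hgΦ' : ∀ z ∈ Φ', g z = 0)
    (O : Finset Φ) (hO : O ⊆ Finset.univ \ Φ')
    (ρ : ℝ) (hρ : 0 < ρ)
    (hle : ∀ z ∈ O, pY z ≤ ρ * pX z)
    (hge : ∀ z ∈ (Finset.univ \ Φ') \ O, ρ * pX z ≤ pY z)
    (hX : ∑ z ∈ O, pX z ≤ ∑ z, g z * pX z) :
    ∑ z ∈ O, pY z ≤ ∑ z, g z * pY z :=
  neyman_pearson_lower_general pX pY g hg0 hg1 Φ' hgΦ' O ρ hρ hle hge hX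
end

section
/- Generalized Neyman–Pearson upper-bound direction for multiple functions: Let X, Y be random variables on a finite space Φ with pmfs p_X, p_Y, and let g_1,...,g_γ: Φ → [0,1] satisfy Σ_{l=1}^{γ} g_l(Z) ≤ η for all Z ∈ Φ, and g_l(Z) = 0 for all Z ∈ Φ' and all l. Suppose O ⊆ Φ satisfies p_Y(Z) ≥ ρ·p_X(Z) for all Z ∈ O and p_Y(Z) ≤ ρ·p_X(Z) for all Z ∈ (Φ \ O) \ Φ', for some ρ > 0. If (1/η)·Σ_l E[g_l(X)] ≤ Pr(X ∈ O), then (1/η)·Σ_l E[g_l(Y)] ≤ Pr(Y ∈ O). -/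
/-!
Average the tests into the single randomized test `φ = (1/η) Σ_l g_l`, which takes values in
`[0, 1]` and vanishes on `Φ'`. For every `z` the factors `𝟙_O(z) - φ(z)` and `pY(z) - ρ pX(z)`
have the same sign (on `Φ' \ O` the first is zero), so summing gives
`Pr(Y ∈ O) - E[φ(Y)] ≥ ρ (Pr(X ∈ O) - E[φ(X)]) ≥ 0`.
-/

open Finset

section NeymanPearson

variable {Φ : Type*} [Fintype Φ] [DecidableEq Φ] (p q φ : Φ → ℝ) (O S : Finset Φ) (ρ : ℝ)

lemma indicator_sub_test_mul_likelihood_ratio_nonneg (hφ0 : ∀ z, 0 ≤ φ z)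
    (hφ1 : ∀ z ∈ O, φ z ≤ 1) (hφS : ∀ z ∈ S, φ z = 0)
    (hge : ∀ z ∈ O, ρ * p z ≤ q z) (hle : ∀ z ∈ (univ \ O) \ S, q z ≤ ρ * p z) (z : Φ) :
    0 ≤ ((if z ∈ O then 1 else 0) - φ z) * (q z - ρ * p z) := by
  by_cases hzO : z ∈ O
  · simp only [hzO, if_true]
    exact mul_nonneg (sub_nonneg.2 (hφ1 z hzO)) (sub_nonneg.2 (hge z hzO))
  by_cases hzS : z ∈ S
  · simp [hzO, hφS z hzS]
  · simp only [hzO, if_false, zero_sub, neg_mul]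
    exact neg_nonneg.2 (mul_nonpos_of_nonneg_of_nonpos (hφ0 z)
      (sub_nonpos.2 (hle z (by simp [hzO, hzS]))))

lemma sum_indicator_sub_test_mul (r : Φ → ℝ) :
    ∑ z, ((if z ∈ O then 1 else 0) - φ z) * r z = ∑ z ∈ O, r z - ∑ z, φ z * r z := by
  simp only [sub_mul, sum_sub_distrib, ite_mul, one_mul, zero_mul, sum_ite_mem, univ_inter]

theorem neyman_pearson_upper_of_test (hρ : 0 ≤ ρ) (hφ0 : ∀ z, 0 ≤ φ z)
    (hφ1 : ∀ z ∈ O, φ z ≤ 1) (hφS : ∀ z ∈ S, φ z = 0)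
    (hge : ∀ z ∈ O, ρ * p z ≤ q z) (hle : ∀ z ∈ (univ \ O) \ S, q z ≤ ρ * p z)
    (hp : ∑ z, φ z * p z ≤ ∑ z ∈ O, p z) :
    ∑ z, φ z * q z ≤ ∑ z ∈ O, q z := by
  have hsum : 0 ≤ ∑ z, ((if z ∈ O then 1 else 0) - φ z) * (q z - ρ * p z) :=
    sum_nonneg fun z _ ↦
      indicator_sub_test_mul_likelihood_ratio_nonneg p q φ O S ρ hφ0 hφ1 hφS hge hle z
  simp only [mul_sub, sum_sub_distrib, mul_left_comm _ ρ, ← mul_sum,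
    sum_indicator_sub_test_mul] at hsum
  linarith [mul_nonneg hρ (sub_nonneg.2 hp)]

end NeymanPearson

theorem neyman_pearson_upper_multi_general {Φ : Type*} [Fintype Φ] [DecidableEq Φ]
    (pX pY : Φ → ℝ)
    (γ : ℕ) (g : Fin γ → Φ → ℝ)
    (hg0 : ∀ l z, 0 ≤ g l z)
    (η : ℝ) (hη : 0 < η) (hsum : ∀ z, ∑ l, g l z ≤ η)
    (Φ' : Finset Φ) (hgΦ' : ∀ l, ∀ z ∈ Φ', g l z = 0)
    (O : Finset Φ) (ρ : ℝ) (hρ : 0 < ρ)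
    (hge : ∀ z ∈ O, ρ * pX z ≤ pY z)
    (hle : ∀ z ∈ (Finset.univ \ O) \ Φ', pY z ≤ ρ * pX z)
    (hX : (1 / η) * ∑ l, ∑ z, g l z * pX z ≤ ∑ z ∈ O, pX z) :
    (1 / η) * ∑ l, ∑ z, g l z * pY z ≤ ∑ z ∈ O, pY z := by
  set φ : Φ → ℝ := fun z ↦ (1 / η) * ∑ l, g l z
  have hφ : ∀ r : Φ → ℝ, (1 / η) * ∑ l, ∑ z, g l z * r z = ∑ z, φ z * r z := fun r ↦ by
    simp only [φ, sum_comm (γ := Fin γ), mul_sum, sum_mul, mul_assoc]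
  rw [hφ] at hX ⊢
  refine neyman_pearson_upper_of_test pX pY φ O Φ' ρ hρ.le
    (fun z ↦ mul_nonneg (by positivity) (sum_nonneg fun l _ ↦ hg0 l z))
    (fun z _ ↦ ?_) (fun z hz ↦ by simp [φ, hgΦ' _ z hz]) hge hle hX
  rw [show φ z = (∑ l, g l z) / η by simp [φ, div_eq_inv_mul], div_le_one hη]
  exact hsum z

/-- Generalized Neyman–Pearson lemma, upper-bound direction for multiple functions.
`g₁,…,g_γ : Φ → [0,1]` satisfy `Σ_l g_l(Z) ≤ η` pointwise and vanish on `Φ'`.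
`O ⊆ Φ` satisfies `pY ≥ ρ·pX` on `O` and `pY ≤ ρ·pX` on `(Φ \ O) \ Φ'` for some `ρ > 0`.
If `(1/η)·Σ_l E[g_l(X)] ≤ Pr(X ∈ O)` then `(1/η)·Σ_l E[g_l(Y)] ≤ Pr(Y ∈ O)`. -/
theorem neyman_pearson_upper_multi {Φ : Type*} [Fintype Φ] [DecidableEq Φ]
    (pX pY : Φ → ℝ)
    (hpX0 : ∀ z, 0 ≤ pX z) (hpY0 : ∀ z, 0 ≤ pY z)
    (hpX1 : ∑ z, pX z = 1) (hpY1 : ∑ z, pY z = 1)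
    (γ : ℕ) (g : Fin γ → Φ → ℝ)
    (hg0 : ∀ l z, 0 ≤ g l z) (hg1 : ∀ l z, g l z ≤ 1)
    (η : ℝ) (hη : 0 < η) (hsum : ∀ z, ∑ l, g l z ≤ η)
    (Φ' : Finset Φ) (hgΦ' : ∀ l, ∀ z ∈ Φ', g l z = 0)
    (O : Finset Φ) (ρ : ℝ) (hρ : 0 < ρ)
    (hge : ∀ z ∈ O, ρ * pX z ≤ pY z)
    (hle : ∀ z ∈ (Finset.univ \ O) \ Φ', pY z ≤ ρ * pX z)
    (hX : (1 / η) * ∑ l, ∑ z, g l z * pX z ≤ ∑ z ∈ O, pX z) :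
    (1 / η) * ∑ l, ∑ z, g l z * pY z ≤ ∑ z ∈ O, pY z :=
  neyman_pearson_upper_multi_general pX pY γ g hg0 η hη hsum Φ' hgΦ' O ρ hρ hge hle hX
end

section
/- Lower bound on poisoned item probability: Let X be uniform over size-s subsets of U (|U|=n), Y uniform over size-s subsets of U' ⊇ U (|U'|=n'), u ∈ U fixed, and g: Φ → [0,1] with g(Z)=0 whenever u ∉ Z. Let p* be an integer multiple of 1/C(n,s) with p* ≤ E[g(X)] and p* ≤ s/n. Then E[g(Y)] ≥ p*·C(n,s)/C(n',s). -/
open Finset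

theorem poisoned_prob_lower_bound_general {α : Type*}
    (U U' : Finset α) (hUU' : U ⊆ U') (n n' s : ℕ)
    (g : Finset α → ℝ) (hg0 : ∀ Z, 0 ≤ g Z)
    (pstar : ℝ)
    (hle : pstar ≤ (∑ Z ∈ U.powersetCard s, g Z) / (n.choose s : ℝ)) :
    pstar * ((n.choose s : ℝ) / (n'.choose s : ℝ))
      ≤ (∑ Z ∈ U'.powersetCard s, g Z) / (n'.choose s : ℝ) := by
  have hU : pstar * (n.choose s : ℝ) ≤ ∑ Z ∈ U.powersetCard s, g Z :=
    mul_le_of_le_div₀ (sum_nonneg fun Z _ => hg0 Z) (Nat.cast_nonneg _) hle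
  have hUU'_sum : ∑ Z ∈ U.powersetCard s, g Z ≤ ∑ Z ∈ U'.powersetCard s, g Z :=
    sum_le_sum_of_subset_of_nonneg (powersetCard_mono hUU') fun Z _ _ => hg0 Z
  rw [mul_div_assoc']
  gcongr
  exact hU.trans hUU'_sum

/-- Lower bound on the poisoned item probability. `X` is uniform over size-`s` subsets of `U`
(`|U| = n`), `Y` uniform over size-`s` subsets of `U' ⊇ U` (`|U'| = n'`), `u ∈ U` is fixed,
and `g : Φ → [0,1]` vanishes on subsets not containing `u`. If `p*` is an integer multiple of
`1/C(n,s)` with `p* ≤ E[g(X)]` and `p* ≤ s/n`, then `E[g(Y)] ≥ p*·C(n,s)/C(n',s)`. -/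
theorem poisoned_prob_lower_bound {α : Type*} [DecidableEq α]
    (U U' : Finset α) (hUU' : U ⊆ U') (n n' s : ℕ) (hn : U.card = n)
    (hn' : U'.card = n') (hs : 1 ≤ s) (hsn : s ≤ n) (hnn' : n ≤ n')
    (u : α) (hu : u ∈ U)
    (g : Finset α → ℝ) (hg0 : ∀ Z, 0 ≤ g Z) (hg1 : ∀ Z, g Z ≤ 1)
    (hgu : ∀ Z, u ∉ Z → g Z = 0)
    (pstar : ℝ) (hmult : ∃ k : ℕ, pstar = (k : ℝ) / (n.choose s : ℝ))
    (hle : pstar ≤ (∑ Z ∈ U.powersetCard s, g Z) / (n.choose s : ℝ))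
    (hsn' : pstar ≤ (s : ℝ) / (n : ℝ)) :
    pstar * ((n.choose s : ℝ) / (n'.choose s : ℝ))
      ≤ (∑ Z ∈ U'.powersetCard s, g Z) / (n'.choose s : ℝ) :=
  poisoned_prob_lower_bound_general U U' hUU' n n' s g hg0 pstar hle
end

section
/- Upper bound on poisoned item probability: With X, Y, u as above, let g: Φ → [0,1] satisfy g(Z)=0 whenever u ∉ Z. Let p̄* be an integer multiple of 1/C(n,s) with E[g(X)] ≤ p̄* ≤ s/n. Then E[g(Y)] ≤ p̄*·C(n,s)/C(n',s) + s/n' − (s/n)·C(n,s)/C(n',s). -/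
/-!
Split the size-`s` subsets of `U'` into those inside `U` and the rest. The first part contributes
at most `p̄*·C(n,s)`; on the rest `g` is at most the indicator of `u ∈ Z`, so it contributes at
most the number of size-`s` subsets of `U'` through `u` minus those of `U`, i.e.
`(s/n')·C(n',s) − (s/n)·C(n,s)`, since a given element lies in an `s/|V|` fraction of the size-`s`
subsets of `V`.
-/

open Finset

theorem card_filter_mem_powersetCard_mul_card {α : Type*} [DecidableEq α] {V : Finset α} {u : α}
    (hu : u ∈ V) (s : ℕ) :
    #{Z ∈ V.powersetCard s | u ∈ Z} * #V = s * (#V).choose s := by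
  rcases s with _ | s
  · simp
  obtain ⟨m, hm⟩ : ∃ m, #V = m + 1 := ⟨_, (Nat.succ_pred_eq_of_pos (card_pos.2 ⟨u, hu⟩)).symm⟩
  have h := card_filter_powersetCard_subset {u} V (s + 1) (singleton_subset_iff.2 hu) (by simp)
  simp only [singleton_subset_iff, card_singleton, hm, Nat.add_sub_cancel] at h
  rw [h, hm, mul_comm, Nat.add_one_mul_choose_eq, mul_comm]

theorem sum_le_sum_add_card_filter_sub_card_filter {β : Type*} {s t : Finset β} (hst : s ⊆ t)
    (p : β → Prop) [DecidablePred p] {f : β → ℝ} (hf : ∀ x ∈ t, f x ≤ if p x then 1 else 0) :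
    ∑ x ∈ t, f x ≤ ∑ x ∈ s, f x + (#{x ∈ t | p x} - #{x ∈ s | p x}) := by
  have h : ∑ x ∈ s, ((if p x then 1 else 0) - f x) ≤ ∑ x ∈ t, ((if p x then 1 else 0) - f x) :=
    sum_le_sum_of_subset_of_nonneg hst fun x hx _ => sub_nonneg.2 (hf x hx)
  simp only [sum_sub_distrib, sum_boole] at h
  linarith

theorem poisoned_prob_upper_bound_general {α : Type*} [DecidableEq α]
    (U U' : Finset α) (hUU' : U ⊆ U') (n n' s : ℕ) (hn : U.card = n)
    (hn' : U'.card = n') (hsn : s ≤ n) (hnn' : n ≤ n')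
    (u : α) (hu : u ∈ U)
    (g : Finset α → ℝ) (hg1 : ∀ Z, g Z ≤ 1)
    (hgu : ∀ Z, u ∉ Z → g Z = 0)
    (pbar : ℝ)
    (hge : (∑ Z ∈ U.powersetCard s, g Z) / (n.choose s : ℝ) ≤ pbar) :
    (∑ Z ∈ U'.powersetCard s, g Z) / (n'.choose s : ℝ)
      ≤ pbar * ((n.choose s : ℝ) / (n'.choose s : ℝ))
        + (s : ℝ) / (n' : ℝ) - ((s : ℝ) / (n : ℝ)) * ((n.choose s : ℝ) / (n'.choose s : ℝ)) := by
  have hcount {V : Finset α} (hV : u ∈ V) :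
      (#{Z ∈ V.powersetCard s | u ∈ Z} : ℝ) = s / #V * (#V).choose s := by
    have hV0 : (#V : ℝ) ≠ 0 := by exact_mod_cast (card_pos.2 ⟨u, hV⟩).ne'
    rw [eq_comm, div_mul_eq_mul_div, div_eq_iff hV0]
    exact_mod_cast (card_filter_mem_powersetCard_mul_card hV s).symm
  have hN : (0 : ℝ) < n.choose s := by exact_mod_cast Nat.choose_pos hsn
  have hN' : (0 : ℝ) < n'.choose s := by exact_mod_cast Nat.choose_pos (hsn.trans hnn')
  have key := sum_le_sum_add_card_filter_sub_card_filter (powersetCard_mono (n := s) hUU') (u ∈ ·)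
    fun (Z : Finset α) _ => by split_ifs with h; exacts [hg1 Z, (hgu Z h).le]
  rw [hcount hu, hcount (hUU' hu), hn, hn'] at key
  rw [div_le_iff₀ hN] at hge
  rw [div_le_iff₀ hN', sub_mul, add_mul, mul_assoc, mul_assoc, div_mul_cancel₀ _ hN'.ne']
  linarith

/-- Upper bound on the poisoned item probability. `X` is uniform over size-`s` subsets of `U`
(`|U| = n`), `Y` uniform over size-`s` subsets of `U' ⊇ U` (`|U'| = n'`), `u ∈ U` fixed,
and `g : Φ → [0,1]` vanishes on subsets not containing `u`. If `p̄*` is an integer multiple of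
`1/C(n,s)` with `E[g(X)] ≤ p̄* ≤ s/n`, then
`E[g(Y)] ≤ p̄*·C(n,s)/C(n',s) + s/n' − (s/n)·C(n,s)/C(n',s)`. -/
theorem poisoned_prob_upper_bound {α : Type*} [DecidableEq α]
    (U U' : Finset α) (hUU' : U ⊆ U') (n n' s : ℕ) (hn : U.card = n)
    (hn' : U'.card = n') (hs : 1 ≤ s) (hsn : s ≤ n) (hnn' : n ≤ n')
    (u : α) (hu : u ∈ U)
    (g : Finset α → ℝ) (hg0 : ∀ Z, 0 ≤ g Z) (hg1 : ∀ Z, g Z ≤ 1)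
    (hgu : ∀ Z, u ∉ Z → g Z = 0)
    (pbar : ℝ) (hmult : ∃ k : ℕ, pbar = (k : ℝ) / (n.choose s : ℝ))
    (hge : (∑ Z ∈ U.powersetCard s, g Z) / (n.choose s : ℝ) ≤ pbar)
    (hsn' : pbar ≤ (s : ℝ) / (n : ℝ)) :
    (∑ Z ∈ U'.powersetCard s, g Z) / (n'.choose s : ℝ)
      ≤ pbar * ((n.choose s : ℝ) / (n'.choose s : ℝ))
        + (s : ℝ) / (n' : ℝ) - ((s : ℝ) / (n : ℝ)) * ((n.choose s : ℝ) / (n'.choose s : ℝ)) :=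
  poisoned_prob_upper_bound_general U U' hUU' n n' s hn hn' hsn hnn' u hu g hg1 hgu pbar hge
end

section
/- Joint upper bound: With X, Y, u as above, let g_1,...,g_c: Φ → [0,1] each vanish on subsets not containing u and satisfy Σ_{l=1}^{c} g_l(Z) ≤ N' for all Z. Let p̄* be an integer multiple of 1/C(n,s) with (1/N')·Σ_l E[g_l(X)] ≤ p̄* ≤ s/n. Then min_{l} E[g_l(Y)] ≤ (N'/c)·(p̄*·C(n,s)/C(n',s) + s/n' − (s/n)·C(n,s)/C(n',s)). -/
open Finset

/-!
Every `g_l` vanishes off the subsets containing `u`, so passing from the `s`-subsets of `U` to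
those of `U'` adds at most `N'` to `∑_l g_l` for each new subset containing `u`; there are
`C(n'-1,s-1) - C(n-1,s-1)` of them, and `C(m-1,s-1) = (s/m)·C(m,s)` turns this count into the
terms `s/n'` and `s/n` of the bound. On the old subsets, `∑_l g_l` sums to at most
`N'·p̄*·C(n,s)` by the hypothesis on the `E[g_l(X)]`. Finally, the minimum over `l` of
`E[g_l(Y)]` is at most their average.
-/

namespace Finset

variable {α : Type*} [DecidableEq α]

theorem card_filter_mem_powersetCard_succ {V : Finset α} {u : α} (hu : u ∈ V) (s : ℕ) :
    #{Z ∈ V.powersetCard (s + 1) | u ∈ Z} = (#V - 1).choose s := by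
  have hnot : {Z ∈ V.powersetCard (s + 1) | u ∉ Z} = (V.erase u).powersetCard (s + 1) := by
    ext Z
    simp only [mem_filter, mem_powersetCard, subset_erase]
    tauto
  have hsplit := card_filter_add_card_filter_not (s := V.powersetCard (s + 1)) (p := (u ∈ ·))
  rw [hnot, card_powersetCard, card_powersetCard, card_erase_of_mem hu] at hsplit
  obtain ⟨m, hm⟩ : ∃ m, #V = m + 1 := ⟨#V - 1, by have := card_pos.2 ⟨u, hu⟩; omega⟩
  rw [hm, Nat.add_sub_cancel, Nat.choose_succ_succ'] at hsplit
  rw [hm, Nat.add_sub_cancel]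
  omega

theorem card_mul_card_filter_mem_powersetCard {V : Finset α} {u : α} (hu : u ∈ V) (s : ℕ) :
    #V * #{Z ∈ V.powersetCard s | u ∈ Z} = s * (#V).choose s := by
  cases s with
  | zero => simp
  | succ s =>
    obtain ⟨m, hm⟩ : ∃ m, #V = m + 1 := ⟨#V - 1, by have := card_pos.2 ⟨u, hu⟩; omega⟩
    rw [card_filter_mem_powersetCard_succ hu, hm, Nat.add_sub_cancel, Nat.add_one_mul_choose_eq,
      mul_comm]

theorem sum_le_sum_add_mul_card_filter_sub {ι : Type*} [DecidableEq ι] {A B : Finset ι}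
    (hAB : A ⊆ B) (p : ι → Prop) [DecidablePred p] {f : ι → ℝ} {M : ℝ}
    (hf : ∀ x, ¬ p x → f x = 0) (hM : ∀ x, f x ≤ M) :
    ∑ x ∈ B, f x ≤ ∑ x ∈ A, f x + M * ((#{x ∈ B | p x} : ℝ) - #{x ∈ A | p x}) := by
  have hsub : {x ∈ A | p x} ⊆ {x ∈ B | p x} := filter_subset_filter p hAB
  have hsum_filter (S : Finset ι) : ∑ x ∈ {x ∈ S | p x}, f x = ∑ x ∈ S, f x :=
    sum_filter_of_ne fun x _ hx => by_contra fun hpx => hx (hf x hpx)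
  have hnew := sum_le_card_nsmul ({x ∈ B | p x} \ {x ∈ A | p x}) f M fun x _ => hM x
  rw [card_sdiff_of_subset hsub, nsmul_eq_mul, Nat.cast_sub (card_le_card hsub)] at hnew
  rw [← hsum_filter B, ← hsum_filter A, ← sum_sdiff hsub]
  linarith

end Finset

theorem div_card_eq_card_filter_mem_powersetCard_div {α : Type*} [DecidableEq α]
    {V : Finset α} {u : α} (hu : u ∈ V) {s : ℕ} (hs : s ≤ #V) :
    (s : ℝ) / #V = #{Z ∈ V.powersetCard s | u ∈ Z} / (#V).choose s := by
  have hV : (0 : ℝ) < #V := by exact_mod_cast card_pos.2 ⟨u, hu⟩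
  have hC : (0 : ℝ) < (#V).choose s := by exact_mod_cast Nat.choose_pos hs
  rw [div_eq_div_iff hV.ne' hC.ne']
  exact_mod_cast (card_mul_card_filter_mem_powersetCard hu s).symm.trans (mul_comm _ _)

theorem poisoned_prob_joint_upper_bound_general {α : Type*} [DecidableEq α]
    (U U' : Finset α) (hUU' : U ⊆ U') (n n' s : ℕ) (hn : U.card = n)
    (hn' : U'.card = n') (hsn : s ≤ n)
    (u : α) (hu : u ∈ U)
    (c : ℕ) (hc : 1 ≤ c) (g : Fin c → Finset α → ℝ)
    (hgu : ∀ l Z, u ∉ Z → g l Z = 0)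
    (N' : ℕ) (hN' : 1 ≤ N') (hsum : ∀ Z, ∑ l, g l Z ≤ (N' : ℝ))
    (pbar : ℝ)
    (hge : (1 / (N' : ℝ)) * ∑ l, (∑ Z ∈ U.powersetCard s, g l Z) / (n.choose s : ℝ) ≤ pbar) :
    (Finset.univ.inf' (Finset.univ_nonempty_iff.2 ⟨⟨0, hc⟩⟩)
        (fun l => (∑ Z ∈ U'.powersetCard s, g l Z) / (n'.choose s : ℝ)))
      ≤ ((N' : ℝ) / (c : ℝ)) *
          (pbar * ((n.choose s : ℝ) / (n'.choose s : ℝ))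
            + (s : ℝ) / (n' : ℝ)
            - ((s : ℝ) / (n : ℝ)) * ((n.choose s : ℝ) / (n'.choose s : ℝ))) := by
  subst hn hn'
  have hC : (0 : ℝ) < (#U).choose s := by exact_mod_cast Nat.choose_pos hsn
  have hC' : (0 : ℝ) < (#U').choose s := by
    exact_mod_cast Nat.choose_pos (hsn.trans (card_le_card hUU'))
  have hN : (0 : ℝ) < N' := by exact_mod_cast hN'
  have hc0 : (0 : ℝ) < c := by exact_mod_cast hc
  have hswap (S : Finset (Finset α)) (k : ℝ) :
      ∑ l, (∑ Z ∈ S, g l Z) / k = (∑ Z ∈ S, ∑ l, g l Z) / k := by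
    rw [← sum_div, sum_comm]
  have hX : ∑ Z ∈ U.powersetCard s, ∑ l, g l Z ≤ N' * pbar * (#U).choose s := by
    rw [hswap, one_div, inv_mul_le_iff₀ hN, div_le_iff₀ hC] at hge
    linarith
  have hY := sum_le_sum_add_mul_card_filter_sub (powersetCard_mono (n := s) hUU') (u ∈ ·)
    (fun Z hZ => sum_eq_zero fun l _ => hgu l Z hZ) hsum
  set E := fun l => (∑ Z ∈ U'.powersetCard s, g l Z) / ((#U').choose s : ℝ)
  have hmin := card_nsmul_le_sum univ E (univ.inf' (univ_nonempty_iff.2 ⟨⟨0, hc⟩⟩) E)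
    fun l _ => inf'_le E (mem_univ l)
  rw [hswap, card_univ, Fintype.card_fin, nsmul_eq_mul] at hmin
  rw [div_card_eq_card_filter_mem_powersetCard_div (hUU' hu) (hsn.trans (card_le_card hUU')),
    div_card_eq_card_filter_mem_powersetCard_div hu hsn, div_mul_div_cancel₀ hC.ne']
  calc univ.inf' _ E ≤ (∑ Z ∈ U'.powersetCard s, ∑ l, g l Z) / (#U').choose s / c := by
        rw [le_div_iff₀ hc0]
        linarith
    _ ≤ (N' * pbar * (#U).choose s + N' * ((#{Z ∈ U'.powersetCard s | u ∈ Z} : ℝ)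
          - #{Z ∈ U.powersetCard s | u ∈ Z})) / (#U').choose s / c := by
        gcongr
        linarith
    _ = _ := by
        field_simp
        ring

/-- Joint upper bound on poisoned item probabilities. `g₁,…,g_c : Φ → [0,1]` each vanish on
subsets not containing `u` and satisfy `Σ_l g_l(Z) ≤ N'` pointwise. If `p̄*` is an integer
multiple of `1/C(n,s)` with `(1/N')·Σ_l E[g_l(X)] ≤ p̄* ≤ s/n`, then
`min_l E[g_l(Y)] ≤ (N'/c)·(p̄*·C(n,s)/C(n',s) + s/n' − (s/n)·C(n,s)/C(n',s))`. -/
theorem poisoned_prob_joint_upper_bound {α : Type*} [DecidableEq α]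
    (U U' : Finset α) (hUU' : U ⊆ U') (n n' e s : ℕ) (hn : U.card = n)
    (hn' : U'.card = n') (hne : n' = n + e) (hs : 1 ≤ s) (hsn : s ≤ n)
    (u : α) (hu : u ∈ U)
    (c : ℕ) (hc : 1 ≤ c) (g : Fin c → Finset α → ℝ)
    (hg0 : ∀ l Z, 0 ≤ g l Z) (hg1 : ∀ l Z, g l Z ≤ 1)
    (hgu : ∀ l Z, u ∉ Z → g l Z = 0)
    (N' : ℕ) (hN' : 1 ≤ N') (hsum : ∀ Z, ∑ l, g l Z ≤ (N' : ℝ))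
    (pbar : ℝ) (hmult : ∃ k : ℕ, pbar = (k : ℝ) / (n.choose s : ℝ))
    (hge : (1 / (N' : ℝ)) * ∑ l, (∑ Z ∈ U.powersetCard s, g l Z) / (n.choose s : ℝ) ≤ pbar)
    (hsn' : pbar ≤ (s : ℝ) / (n : ℝ)) :
    (Finset.univ.inf' (Finset.univ_nonempty_iff.2 ⟨⟨0, hc⟩⟩)
        (fun l => (∑ Z ∈ U'.powersetCard s, g l Z) / (n'.choose s : ℝ)))
      ≤ ((N' : ℝ) / (c : ℝ)) *
          (pbar * ((n.choose s : ℝ) / (n'.choose s : ℝ))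
            + (s : ℝ) / (n' : ℝ)
            - ((s : ℝ) / (n : ℝ)) * ((n.choose s : ℝ) / (n'.choose s : ℝ))) :=
  poisoned_prob_joint_upper_bound_general U U' hUU' n n' s hn hn' hsn u hu c hc g hgu N' hN' hsum
    pbar hge
end

section
/- Monotonicity enabling binary search: For fixed lower bounds p̲_{μ_1} ≥ p̲_{μ_2} ≥ ... ≥ p̲_{μ_k} and fixed upper bounds p̄_j (j outside the target set), define L(r') = p̲*_{μ_{r'}} (where p̲*_{μ_{r'}} = ⌊p̲_{μ_{r'}}·C(n,s)⌋/C(n,s)) and R(r') = min( min_{c=1}^{N−r'+1} N'·(p̄*_{H_c} + σ)/c , p̄*_{v_1} + σ ), where H_c is the set of c items with smallest upper bounds among the N−r'+1 items with largest upper bounds outside the target set. Then L(r') is non-increasing in r' and R(r') is non-decreasing in r'. Consequently, the set of r' satisfying L(r') > R(r') is a downward-closed interval {1,...,r}, so binary search correctly finds the maximal feasible r'. -/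
/-!
Rounding to the grid `ℤ / C` is monotone, so `L` inherits the order of the sorted `q`.
Raising `r'` lowers `m = N - r'`: the minimum in `R` is then taken over fewer `c`, and each
window `H_c` slides towards items with larger upper bounds, so every term of the minimum grows.
-/

open Finset

theorem sum_Icc_window_antitone {w : ℕ → ℝ} (hw : ∀ i j, 1 ≤ i → i ≤ j → w j ≤ w i)
    {m m' c : ℕ} (hmm' : m ≤ m') (hc : c ≤ m + 1) :
    ∑ j ∈ Icc (m' + 2 - c) (m' + 1), w j ≤ ∑ j ∈ Icc (m + 2 - c) (m + 1), w j := by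
  have window (n : ℕ) (hn : c ≤ n + 1) :
      ∑ j ∈ Icc (n + 2 - c) (n + 1), w j = ∑ i ∈ range c, w (n + 2 - c + i) := by
    rw [← Ico_add_one_right_eq_Icc, sum_Ico_eq_sum_range]
    congr 2
    omega
  rw [window m hc, window m' (by omega)]
  exact sum_le_sum fun i _ => hw _ _ (by omega) (by omega)

/-- The right-hand side `R r'` of the feasibility constraint, as a function of `m = N - r'`. -/
noncomputable def tailBound (N' C : ℕ) (σ : ℝ) (w : ℕ → ℝ) (m : ℕ) : ℝ :=
  min ((Icc 1 (m + 1)).inf' (nonempty_Icc.2 (by omega))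
        (fun c => (N' : ℝ) *
          ((⌈((∑ j ∈ Icc (m + 2 - c) (m + 1), w j) / (N' : ℝ)) * (C : ℝ)⌉ : ℝ)
              / (C : ℝ) + σ) / (c : ℝ)))
    ((⌈w (m + 1) * (C : ℝ)⌉ : ℝ) / (C : ℝ) + σ)

theorem tailBound_antitone (N' C : ℕ) (σ : ℝ) {w : ℕ → ℝ}
    (hw : ∀ i j, 1 ≤ i → i ≤ j → w j ≤ w i) : Antitone (tailBound N' C σ w) := by
  intro m m' hmm'
  refine min_le_min ?_ ?_
  · refine le_inf' _ _ fun c hc => ?_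
    rw [mem_Icc] at hc
    refine (inf'_le _ (mem_Icc.2 ⟨hc.1, by omega⟩)).trans ?_
    gcongr _ * (⌈?_ / _ * _⌉ / _ + _) / _
    exact sum_Icc_window_antitone hw hmm' hc.2
  · have : w (m' + 1) ≤ w (m + 1) := hw _ _ (by omega) (by omega)
    gcongr

/-- Monotonicity enabling binary search in PORE. With sorted lower bounds
`q 1 ≥ q 2 ≥ ⋯ ≥ q k` (so `L r' = ⌊q r'·C⌋/C` is non-increasing) and descending-sorted
upper bounds `w 1 ≥ w 2 ≥ ⋯` outside the target set, where `H_c` for a given `r'` consists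
of the `c` items with smallest upper bounds among the `N − r' + 1` items with largest upper
bounds (i.e. positions `N − r' + 2 − c, …, N − r' + 1` of `w`), define
`R r' = min ( min_{c=1}^{N−r'+1} N'·(⌈(Σ_{j∈H_c} w j / N')·C⌉/C + σ)/c , ⌈w(N−r'+1)·C⌉/C + σ )`.
Then `L` is non-increasing, `R` is non-decreasing, and the feasible set
`{r' : L r' > R r'}` is downward closed on `{1, …, min k N}`. -/
theorem binary_search_monotonicity
    (k N N' C : ℕ)
    (σ : ℝ)
    (q : ℕ → ℝ)
    (hqa : ∀ i j, 1 ≤ i → i ≤ j → j ≤ k → q j ≤ q i)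
    (w : ℕ → ℝ)
    (hwa : ∀ i j, 1 ≤ i → i ≤ j → w j ≤ w i) :
    let L : ℕ → ℝ := fun r' => (⌊q r' * (C : ℝ)⌋ : ℝ) / (C : ℝ)
    let R : ℕ → ℝ := fun r' =>
      min ((Finset.Icc 1 (N - r' + 1)).inf'
            (Finset.nonempty_Icc.2 (by omega))
            (fun c => (N' : ℝ) *
              ((⌈((∑ j ∈ Finset.Icc (N - r' + 2 - c) (N - r' + 1), w j) / (N' : ℝ)) * (C : ℝ)⌉ : ℝ)
                  / (C : ℝ) + σ) / (c : ℝ)))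
        ((⌈w (N - r' + 1) * (C : ℝ)⌉ : ℝ) / (C : ℝ) + σ)
    (∀ r₁ r₂, 1 ≤ r₁ → r₁ ≤ r₂ → r₂ ≤ min k N → L r₂ ≤ L r₁) ∧
    (∀ r₁ r₂, 1 ≤ r₁ → r₁ ≤ r₂ → r₂ ≤ min k N → R r₁ ≤ R r₂) ∧
    (∀ r₁ r₂, 1 ≤ r₁ → r₁ ≤ r₂ → r₂ ≤ min k N → R r₂ < L r₂ → R r₁ < L r₁) := by
  intro L R
  have hL : ∀ r₁ r₂, 1 ≤ r₁ → r₁ ≤ r₂ → r₂ ≤ min k N → L r₂ ≤ L r₁ := by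
    intro r₁ r₂ h₁ h₁₂ h₂
    have : q r₂ ≤ q r₁ := hqa r₁ r₂ h₁ h₁₂ (h₂.trans (min_le_left _ _))
    dsimp only [L]
    gcongr
  have hR : ∀ r₁ r₂, 1 ≤ r₁ → r₁ ≤ r₂ → r₂ ≤ min k N → R r₁ ≤ R r₂ :=
    fun r₁ r₂ _ h₁₂ _ => tailBound_antitone N' C σ hwa (Nat.sub_le_sub_left h₁₂ N)
  refine ⟨hL, hR, fun r₁ r₂ h₁ h₁₂ h₂ hfeas => ?_⟩
  exact (hR r₁ r₂ h₁ h₁₂ h₂).trans_lt (hfeas.trans_le (hL r₁ r₂ h₁ h₁₂ h₂))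
end

section
/- For a top-N selection by scores: if a set S of N items is such that every item in S has score at least as large as every item not in S, and A is any set of items with |A ∩ S| < r where r ≤ min(|A|, N), then the r-th largest score among items of A is at most the (N−r+1)-th largest score among items not in A. -/
open scoped Classical

/-- The `r`-th largest value (order statistic from above) of `f` over a finset `A`:
the `(r-1)`-indexed entry of the descending sort of the multiset of values. -/
noncomputable def kthLargest {ι : Type*} (A : Finset ι) (f : ι → ℝ) (r : ℕ) : ℝ :=
  ((A.val.map f).sort (· ≥ ·)).getD (r - 1) 0

/-!
Let `a` be the `r`-th largest score in `A`. At least `r` items of `A` score `≥ a`, and fewer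
than `r` items of `A` lie in `S`, so some item outside `S` scores `≥ a`; since `S` is a top-`N`
set, every item of `S` then scores `≥ a`. The items of `S \ A`, at least `N - r + 1` of them,
lie outside `A` and score `≥ a`, which bounds the `(N - r + 1)`-th largest score outside `A`
from below by `a`.
-/

open Finset

namespace List.Pairwise

variable {α : Type*} [LinearOrder α]

theorem succ_le_length_filter_getElem_le {l : List α} (hl : l.Pairwise (· ≥ ·)) {k : ℕ}
    (hk : k < l.length) : k + 1 ≤ (l.filter (l[k] ≤ ·)).length := by
  induction l generalizing k with
  | nil => simp at hk
  | cons x l ih =>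
    obtain ⟨hx, hl⟩ := List.pairwise_cons.mp hl
    cases k with
    | zero => simp
    | succ k =>
      have hk' : k < l.length := by simpa using hk
      simpa [List.filter_cons, hx _ (List.getElem_mem hk')] using ih hl hk'

theorem length_filter_getElem_lt_le {l : List α} (hl : l.Pairwise (· ≥ ·)) {k : ℕ}
    (hk : k < l.length) : (l.filter (l[k] < ·)).length ≤ k := by
  induction l generalizing k with
  | nil => simp at hk
  | cons x l ih =>
    obtain ⟨hx, hl⟩ := List.pairwise_cons.mp hl
    cases k with
    | zero => simpa [List.filter_cons] using hx
    | succ k =>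
      have hk' : k < l.length := by simpa using hk
      have := ih hl hk'
      grind

end List.Pairwise

section kthLargest

variable {ι : Type*} (A : Finset ι) (f : ι → ℝ)

theorem card_filter_eq_length_filter_sort (p : ℝ → Prop) [DecidablePred p] :
    #{i ∈ A | p (f i)} = (((A.val.map f).sort (· ≥ ·)).filter (fun x => decide (p x))).length := by
  rw [← List.countP_eq_length_filter, ← Multiset.coe_countP, Multiset.sort_eq,
    Multiset.countP_map, ← filter_val]
  rfl

theorem kthLargest_eq_getElem {k : ℕ} (hk0 : 0 < k) (hk : k ≤ #A) :
    kthLargest A f k = ((A.val.map f).sort (· ≥ ·))[k - 1]'(by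
      simp only [Multiset.length_sort, Multiset.card_map, card_val]; omega) :=
  List.getD_eq_getElem _ _ _

theorem le_card_filter_kthLargest_le {k : ℕ} (hk : k ≤ #A) :
    k ≤ #{i ∈ A | kthLargest A f k ≤ f i} := by
  rcases Nat.eq_zero_or_pos k with rfl | hk0
  · exact Nat.zero_le _
  rw [card_filter_eq_length_filter_sort, kthLargest_eq_getElem A f hk0 hk]
  have := (Multiset.pairwise_sort (A.val.map f) (· ≥ ·)).succ_le_length_filter_getElem_le
    (k := k - 1) (by simp only [Multiset.length_sort, Multiset.card_map, card_val]; omega)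
  omega

theorem card_filter_kthLargest_lt_lt {k : ℕ} (hk0 : 0 < k) (hk : k ≤ #A) :
    #{i ∈ A | kthLargest A f k < f i} < k := by
  rw [card_filter_eq_length_filter_sort, kthLargest_eq_getElem A f hk0 hk]
  have := (Multiset.pairwise_sort (A.val.map f) (· ≥ ·)).length_filter_getElem_lt_le
    (k := k - 1) (by simp only [Multiset.length_sort, Multiset.card_map, card_val]; omega)
  omega

theorem le_kthLargest_of_le_card_filter {k : ℕ} {a : ℝ} (hk0 : 0 < k)
    (h : k ≤ #{i ∈ A | a ≤ f i}) : a ≤ kthLargest A f k := by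
  have hk : k ≤ #A := h.trans (card_filter_le _ _)
  by_contra! hlt
  have hsub : {i ∈ A | a ≤ f i} ⊆ {i ∈ A | kthLargest A f k < f i} :=
    monotone_filter_right _ fun _ _ hi => hlt.trans_le hi
  have := card_filter_kthLargest_lt_lt A f hk0 hk
  have := card_le_card hsub
  omega

end kthLargest

theorem top_N_order_statistic_general {ι : Type*} [Fintype ι] [DecidableEq ι]
    (score : ι → ℝ) (N r : ℕ)
    (S : Finset ι) (hS : S.card = N)
    (htop : ∀ i ∈ S, ∀ j ∉ S, score j ≤ score i)
    (A : Finset ι) (hrA : r ≤ A.card) (hrN : r ≤ N)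
    (hlt : (A ∩ S).card < r) :
    kthLargest A score r ≤ kthLargest (Finset.univ \ A) score (N - r + 1) := by
  set a := kthLargest A score r
  obtain ⟨i, -, hia, hiS⟩ : ∃ i ∈ A, a ≤ score i ∧ i ∉ S := by
    by_contra! hall
    have hsub : {i ∈ A | a ≤ score i} ⊆ A ∩ S := fun i hi => by
      obtain ⟨hiA, hia⟩ := mem_filter.mp hi
      exact mem_inter.mpr ⟨hiA, hall i hiA hia⟩
    have : r ≤ #{i ∈ A | a ≤ score i} := le_card_filter_kthLargest_le A score hrA
    have := card_le_card hsub
    omega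
  have hsub : S \ A ⊆ {j ∈ univ \ A | a ≤ score j} := fun j hj => by
    obtain ⟨hjS, hjA⟩ := mem_sdiff.mp hj
    exact mem_filter.mpr ⟨mem_sdiff.mpr ⟨mem_univ j, hjA⟩, hia.trans (htop j hjS i hiS)⟩
  have hcard : #(S \ A) + #(A ∩ S) = N := by
    rw [inter_comm, card_sdiff_add_card_inter, hS]
  exact le_kthLargest_of_le_card_filter _ _ (Nat.succ_pos _)
    (by have := card_le_card hsub; omega)

/-- Top-`N` selection by scores: if every item of `S` (with `|S| = N`) scores at least as much
as every item outside `S`, and `A` is a set of items with `|A ∩ S| < r` where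
`r ≤ min(|A|, N)` and `r ≥ 1`, then the `r`-th largest score among items of `A` is at most the
`(N − r + 1)`-th largest score among items not in `A`. -/
theorem top_N_order_statistic {ι : Type*} [Fintype ι] [DecidableEq ι]
    (score : ι → ℝ) (N r : ℕ) (hr : 1 ≤ r)
    (S : Finset ι) (hS : S.card = N)
    (htop : ∀ i ∈ S, ∀ j ∉ S, score j ≤ score i)
    (A : Finset ι) (hrA : r ≤ A.card) (hrN : r ≤ N)
    (hlt : (A ∩ S).card < r) :
    kthLargest A score r ≤ kthLargest (Finset.univ \ A) score (N - r + 1) :=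
  top_N_order_statistic_general score N r S hS htop A hrA hrN hlt
end

section
/- If T_i ~ Binomial(T, p_i) and p̲_i = Beta(α; T_i, T − T_i + 1) denotes the α-quantile of the Beta distribution with parameters (T_i, T − T_i + 1) (the Clopper–Pearson lower confidence limit), then Pr(p̲_i ≤ p_i) ≥ 1 − α. -/
open scoped Classical

/-- The CDF of the Beta distribution with parameters `a, b`:
`F(x) = ∫_0^x t^(a-1)·(1-t)^(b-1)·Γ(a+b)/(Γ(a)·Γ(b)) dt`. -/
noncomputable def betaCDF (a b : ℝ) (x : ℝ) : ℝ :=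
  ∫ t in Set.Ioc (0 : ℝ) x,
    t ^ (a - 1) * (1 - t) ^ (b - 1) * (Real.Gamma (a + b) / (Real.Gamma a * Real.Gamma b))

/-- The `β`-th quantile of the Beta distribution with parameters `a, b`. -/
noncomputable def betaQuantile (β a b : ℝ) : ℝ :=
  sInf {x : ℝ | x ∈ Set.Icc (0 : ℝ) 1 ∧ β ≤ betaCDF a b x}

/-- The Clopper–Pearson lower confidence limit after observing `t` successes out of `T`:
the `α`-quantile of `Beta(t, T − t + 1)`, taken to be `0` when `t = 0`. -/
noncomputable def clopperPearsonLower (α : ℝ) (T t : ℕ) : ℝ :=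
  if t = 0 then 0 else betaQuantile α (t : ℝ) ((T : ℝ) - (t : ℝ) + 1)

/-!
Integration by parts,
`(a + 1) ∫₀ᵖ xᵃ (1 - x)ᵇ⁺¹ = pᵃ⁺¹ (1 - p)ᵇ⁺¹ + (b + 1) ∫₀ᵖ xᵃ⁺¹ (1 - x)ᵇ`,
peels off one binomial term at a time and identifies `betaCDF t (T - t + 1) p` with the
binomial upper tail `P(X ≥ t)` for `1 ≤ t ≤ T`. So the lower limit after observing `t` is at
most `p` as soon as `P(X ≥ t) ≥ α`. The outcomes with `P(X ≥ t) < α` all lie in `{X ≥ t₀}`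
for the least such `t₀`, an event of probability `< α`.
-/
open Finset Nat

theorem betaCDF_natCast_add_one (a b : ℕ) {p : ℝ} (hp : 0 ≤ p) :
    betaCDF (a + 1) (b + 1) p =
      ((a + b + 1)! / (a ! * b !) : ℝ) * ∫ x in (0 : ℝ)..p, x ^ a * (1 - x) ^ b := by
  have hGamma : Real.Gamma ((a : ℝ) + 1 + (b + 1)) = (a + b + 1)! := by
    rw [← Real.Gamma_nat_eq_factorial]; push_cast; ring_nf
  rw [betaCDF, intervalIntegral.integral_of_le hp, ← MeasureTheory.integral_const_mul]
  refine MeasureTheory.setIntegral_congr_fun measurableSet_Ioc fun x _ ↦ ?_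
  simp only [add_sub_cancel_right, Real.rpow_natCast, hGamma, Real.Gamma_nat_eq_factorial]
  ring

theorem hasDerivAt_pow_mul_one_sub_pow (m n : ℕ) (x : ℝ) :
    HasDerivAt (fun y : ℝ ↦ y ^ m * (1 - y) ^ n)
      (m * x ^ (m - 1) * (1 - x) ^ n - n * x ^ m * (1 - x) ^ (n - 1)) x :=
  ((hasDerivAt_pow m x).fun_mul (((hasDerivAt_id' x).const_sub 1).fun_pow n)).congr_deriv
    (by ring)

theorem integral_pow_mul_one_sub_pow_succ (a b : ℕ) (p : ℝ) :
    (a + 1) * ∫ x in (0 : ℝ)..p, x ^ a * (1 - x) ^ (b + 1) =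
      p ^ (a + 1) * (1 - p) ^ (b + 1) +
        (b + 1) * ∫ x in (0 : ℝ)..p, x ^ (a + 1) * (1 - x) ^ b := by
  have hFTC := intervalIntegral.integral_eq_sub_of_hasDerivAt
    (fun x _ ↦ hasDerivAt_pow_mul_one_sub_pow (a + 1) (b + 1) x)
    (Continuous.intervalIntegrable (by fun_prop) 0 p)
  rw [intervalIntegral.integral_sub (Continuous.intervalIntegrable (by fun_prop) 0 p)
    (Continuous.intervalIntegrable (by fun_prop) 0 p)] at hFTC
  simp only [add_tsub_cancel_right, mul_assoc, intervalIntegral.integral_const_mul,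
    zero_pow (succ_ne_zero a), zero_mul, sub_zero] at hFTC
  push_cast at hFTC
  linarith

theorem betaCDF_natCast_add_one_eq_sum (a b : ℕ) {p : ℝ} (hp : 0 ≤ p) :
    betaCDF (a + 1) (b + 1) p =
      ∑ k ∈ Ico (a + 1) (a + b + 2),
        ((a + b + 1).choose k : ℝ) * p ^ k * (1 - p) ^ (a + b + 1 - k) := by
  induction b generalizing a with
  | zero =>
    have hint : ∫ x in (0 : ℝ)..p, x ^ a * (1 - x) ^ 0 = p ^ (a + 1) / (a + 1) := by
      simp [integral_pow]
    rw [betaCDF_natCast_add_one a 0 hp, hint, add_zero, Ico_succ_singleton, sum_singleton,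
      choose_self, tsub_self, factorial_succ, factorial_zero]
    push_cast
    field_simp
  | succ b ih =>
    rw [sum_eq_sum_Ico_succ_bot (by omega), show a + (b + 1) + 2 = a + 1 + b + 2 by ring,
      show a + (b + 1) + 1 = a + 1 + b + 1 by ring, ← ih (a + 1),
      betaCDF_natCast_add_one a (b + 1) hp, betaCDF_natCast_add_one (a + 1) b hp,
      show a + 1 + b + 1 - (a + 1) = b + 1 by omega]
    have hparts := integral_pow_mul_one_sub_pow_succ a b p
    have hchoose : ((a + 1 + b + 1).choose (a + 1) * (a + 1)! * (b + 1)! : ℝ) =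
        (a + 1 + b + 1)! := by
      have h := add_choose_mul_factorial_mul_factorial (b + 1) (a + 1)
      rw [show b + 1 + (a + 1) = a + 1 + b + 1 by ring] at h
      rw [← h]
      push_cast
      ring
    rw [show a + (b + 1) + 1 = a + 1 + b + 1 by ring, ← hchoose]
    simp only [factorial_succ, cast_mul, cast_add, cast_one]
    field_simp
    linear_combination ((a + 1 + b + 1).choose (a + 1) : ℝ) * hparts

theorem betaCDF_eq_sum_Ico_choose {T t : ℕ} (ht : 1 ≤ t) (htT : t ≤ T) {p : ℝ} (hp : 0 ≤ p) :
    betaCDF t (T - t + 1) p =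
      ∑ k ∈ Ico t (T + 1), (T.choose k : ℝ) * p ^ k * (1 - p) ^ (T - k) := by
  obtain ⟨a, rfl⟩ : ∃ a, t = a + 1 := ⟨t - 1, by omega⟩
  obtain ⟨b, rfl⟩ : ∃ b, T = a + 1 + b := ⟨T - (a + 1), by omega⟩
  rw [show a + 1 + b = a + b + 1 by ring]
  convert betaCDF_natCast_add_one_eq_sum a b hp using 2 <;> push_cast <;> ring

theorem betaQuantile_le {β a b p : ℝ} (hp : p ∈ Set.Icc 0 1) (h : β ≤ betaCDF a b p) :
    betaQuantile β a b ≤ p :=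
  csInf_le ⟨0, fun _ hx ↦ hx.1.1⟩ ⟨hp, h⟩

theorem clopperPearsonLower_le {α p : ℝ} {T t : ℕ} (hp : p ∈ Set.Icc 0 1) (htT : t ≤ T)
    (hα : α ≤ ∑ k ∈ Ico t (T + 1), (T.choose k : ℝ) * p ^ k * (1 - p) ^ (T - k)) :
    clopperPearsonLower α T t ≤ p := by
  rw [clopperPearsonLower]
  split_ifs with ht
  · exact hp.1
  · exact betaQuantile_le hp ((betaCDF_eq_sum_Ico_choose (by omega) htT hp.1).symm ▸ hα)

theorem sum_range_choose_mul_pow_mul_one_sub_pow (T : ℕ) (p : ℝ) :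
    ∑ k ∈ range (T + 1), (T.choose k : ℝ) * p ^ k * (1 - p) ^ (T - k) = 1 := by
  calc _ = ∑ k ∈ range (T + 1), p ^ k * (1 - p) ^ (T - k) * T.choose k :=
        sum_congr rfl fun k _ ↦ by ring
    _ = 1 := by rw [← add_pow, add_sub_cancel, one_pow]

theorem sum_filter_sum_Ico_lt_le {f : ℕ → ℝ} (hf : ∀ k, 0 ≤ f k) {α : ℝ} (hα : 0 ≤ α)
    (N : ℕ) : ∑ t ∈ (range N).filter (fun t ↦ ∑ k ∈ Ico t N, f k < α), f t ≤ α := by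
  set S := (range N).filter (fun t ↦ ∑ k ∈ Ico t N, f k < α)
  rcases S.eq_empty_or_nonempty with hS | hS
  · simpa [hS] using hα
  have hmin := (mem_filter.mp (S.min'_mem hS)).2
  have hsub : S ⊆ Ico (S.min' hS) N := fun t ht ↦
    mem_Ico.mpr ⟨S.min'_le t ht, mem_range.mp (mem_filter.mp ht).1⟩
  exact (sum_le_sum_of_subset_of_nonneg hsub fun k _ _ ↦ hf k).trans hmin.le

theorem clopper_pearson_lower_coverage_general (T : ℕ) (p : ℝ)
    (hp0 : 0 ≤ p) (hp1 : p ≤ 1) (α : ℝ) (hα0 : 0 < α) :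
    1 - α ≤ ∑ t ∈ Finset.range (T + 1),
      (T.choose t : ℝ) * p ^ t * (1 - p) ^ (T - t) *
        (if clopperPearsonLower α T t ≤ p then 1 else 0) := by
  set f : ℕ → ℝ := fun k ↦ (T.choose k : ℝ) * p ^ k * (1 - p) ^ (T - k)
  have hq : 0 ≤ 1 - p := by linarith
  have hf : ∀ k, 0 ≤ f k := fun k ↦ by positivity
  let tailLt : ℕ → Prop := fun t ↦ ∑ k ∈ Ico t (T + 1), f k < α
  have hcovered : (range (T + 1)).filter (¬ tailLt ·) ⊆
      (range (T + 1)).filter (clopperPearsonLower α T · ≤ p) := fun t ht ↦ by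
    rw [mem_filter, mem_range] at ht ⊢
    exact ⟨ht.1, clopperPearsonLower_le ⟨hp0, hp1⟩ (by omega) (not_lt.mp ht.2)⟩
  calc 1 - α ≤ 1 - ∑ t ∈ (range (T + 1)).filter tailLt, f t := by
        linarith [sum_filter_sum_Ico_lt_le hf hα0.le (T + 1)]
    _ = ∑ t ∈ (range (T + 1)).filter (¬ tailLt ·), f t := by
        rw [← sum_range_choose_mul_pow_mul_one_sub_pow T p,
          ← sum_filter_add_sum_filter_not _ tailLt]
        ring
    _ ≤ ∑ t ∈ (range (T + 1)).filter (clopperPearsonLower α T · ≤ p), f t :=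
        sum_le_sum_of_subset_of_nonneg hcovered fun k _ _ ↦ hf k
    _ = _ := by simp only [sum_filter, mul_ite, mul_one, mul_zero, f]

/-- Clopper–Pearson coverage: if `T_i ∼ Binomial(T, p)` and `p̲_i` is the Clopper–Pearson
lower confidence limit `Beta(α; T_i, T − T_i + 1)`, then `Pr(p̲_i ≤ p) ≥ 1 − α`.
The probability is written as the expectation under the binomial pmf of the indicator of the
event that the lower limit does not exceed the true parameter `p`. -/
theorem clopper_pearson_lower_coverage (T : ℕ) (hT : 1 ≤ T) (p : ℝ)
    (hp0 : 0 ≤ p) (hp1 : p ≤ 1) (α : ℝ) (hα0 : 0 < α) (hα1 : α < 1) :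
    1 - α ≤ ∑ t ∈ Finset.range (T + 1),
      (T.choose t : ℝ) * p ^ t * (1 - p) ^ (T - t) *
        (if clopperPearsonLower α T t ≤ p then 1 else 0) :=
  clopper_pearson_lower_coverage_general T p hp0 hp1 α hα0
end
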